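/- Let K = (S, Act, →, AP, 𝓛) be a Kripke transition system (doubly labelled transition system), σ a path in K, and φ a UCTL formula. Then the mapping ks₂' preserves truth: K,σ ⊨ φ if and only if ks₂'(K), ks₂'(σ) ⊨ ks₂'(φ). -/
import Mathlib


/-!
Statement 9: the mapping `ks₂'` from UCTL (over Kripke transition systems) to CTL
(over Kripke structures) preserves truth:
`K,σ ⊨ φ` iff `ks₂'(K), ks₂'(σ) ⊨ ks₂'(φ)`.
-/

namespace Stmt9

/-- A path in a Kripke transition system with transition relation `Tr ⊆ S × Act × S`. -/
structure LPath {S Act : Type} (Tr : S → Act → S → Prop) where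
  states : ℕ → S
  acts : ℕ → Act
  valid : ∀ n, Tr (states n) (acts n) (states (n + 1))

/-- A path in a Kripke structure with transition relation `R ⊆ S × S`. -/
structure KPath {S : Type} (R : S → S → Prop) where
  states : ℕ → S
  valid : ∀ n, R (states n) (states (n + 1))

/-- Action formulas over `Act`: boolean combinations of actions. -/
inductive AForm (Act : Type) : Type
  | tt : AForm Act
  | atom : Act → AForm Act
  | neg : AForm Act → AForm Act
  | and : AForm Act → AForm Act → AForm Act

/-- Satisfaction of an action formula by an action. -/
def asatA {Act : Type} : AForm Act → Act → Prop
  | .tt, _ => True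
  | .atom b, a => a = b
  | .neg χ, a => ¬ asatA χ a
  | .and χ χ', a => asatA χ a ∧ asatA χ' a

mutual
/-- UCTL state formulas over actions `Act` and atomic propositions `AP`:
`φ ::= true | p | ¬φ | φ∧φ' | ∃π`. -/
inductive USF (Act AP : Type) : Type
  | tt : USF Act AP
  | atom : AP → USF Act AP
  | neg : USF Act AP → USF Act AP
  | and : USF Act AP → USF Act AP → USF Act AP
  | ex : UPF Act AP → USF Act AP

/-- UCTL path formulas over actions `Act` and atomic propositions `AP`:
`π ::= X_χ φ | φ _χU_χ' φ' | φ _χW_χ' φ'`. -/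
inductive UPF (Act AP : Type) : Type
  | anext : AForm Act → USF Act AP → UPF Act AP
  | unt : USF Act AP → AForm Act → AForm Act → USF Act AP → UPF Act AP
  | wunt : USF Act AP → AForm Act → AForm Act → USF Act AP → UPF Act AP
end

mutual
/-- Satisfaction of UCTL state formulas at a state of a KTS. -/
def usatS {S Act AP : Type} (Tr : S → Act → S → Prop) (Lab : S → Set AP) :
    USF Act AP → S → Prop
  | .tt, _ => True
  | .atom p, s => p ∈ Lab s
  | .neg φ, s => ¬ usatS Tr Lab φ s
  | .and φ ψ, s => usatS Tr Lab φ s ∧ usatS Tr Lab ψ s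
  | .ex π, s => ∃ σ : LPath Tr, σ.states 0 = s ∧ usatP Tr Lab π σ

/-- Satisfaction of UCTL path formulas on a path of a KTS.
`X_χ φ` holds iff the first transition satisfies `χ` and its target satisfies `φ`;
`φ _χU_χ' φ'` holds iff at some later position the incoming transition satisfies `χ'`
and the state satisfies `φ'`, while all earlier states satisfy `φ` and all earlier
transitions satisfy `χ`; `φ _χW_χ' φ'` is the weak variant. -/
def usatP {S Act AP : Type} (Tr : S → Act → S → Prop) (Lab : S → Set AP) :
    UPF Act AP → LPath Tr → Prop
  | .anext χ φ, σ => asatA χ (σ.acts 0) ∧ usatS Tr Lab φ (σ.states 1)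
  | .unt φ χ χ' φ', σ =>
      ∃ j, asatA χ' (σ.acts j) ∧ usatS Tr Lab φ' (σ.states (j + 1)) ∧
        (∀ i ≤ j, usatS Tr Lab φ (σ.states i)) ∧ (∀ i < j, asatA χ (σ.acts i))
  | .wunt φ χ χ' φ', σ =>
      (∃ j, asatA χ' (σ.acts j) ∧ usatS Tr Lab φ' (σ.states (j + 1)) ∧
        (∀ i ≤ j, usatS Tr Lab φ (σ.states i)) ∧ (∀ i < j, asatA χ (σ.acts i))) ∨
      (∀ i, usatS Tr Lab φ (σ.states i) ∧ asatA χ (σ.acts i))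
end

mutual
/-- CTL state formulas over atomic propositions `AP'`. -/
inductive CSF (AP : Type) : Type
  | tt : CSF AP
  | atom : AP → CSF AP
  | neg : CSF AP → CSF AP
  | and : CSF AP → CSF AP → CSF AP
  | ex : CPF AP → CSF AP

/-- CTL path formulas over atomic propositions `AP'`: `π ::= Xφ | φ U φ' | φ W φ'`. -/
inductive CPF (AP : Type) : Type
  | next : CSF AP → CPF AP
  | unt : CSF AP → CSF AP → CPF AP
  | wunt : CSF AP → CSF AP → CPF AP
end

/-- Disjunction of CTL state formulas, expressed with `¬` and `∧`. -/
def CSF.or {AP : Type} (φ ψ : CSF AP) : CSF AP := .neg (.and (.neg φ) (.neg ψ))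

mutual
/-- Satisfaction of CTL state formulas at a state of a Kripke structure. -/
def csatS {S AP : Type} (R : S → S → Prop) (Lab : S → Set AP) : CSF AP → S → Prop
  | .tt, _ => True
  | .atom p, s => p ∈ Lab s
  | .neg φ, s => ¬ csatS R Lab φ s
  | .and φ ψ, s => csatS R Lab φ s ∧ csatS R Lab ψ s
  | .ex π, s => ∃ σ : KPath R, σ.states 0 = s ∧ csatP R Lab π σ

/-- Satisfaction of CTL path formulas on a path of a Kripke structure (standard
semantics; `W` is the weak until). -/
def csatP {S AP : Type} (R : S → S → Prop) (Lab : S → Set AP) : CPF AP → KPath R → Prop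
  | .next φ, σ => csatS R Lab φ (σ.states 1)
  | .unt φ φ', σ =>
      ∃ j, csatS R Lab φ' (σ.states j) ∧ ∀ i < j, csatS R Lab φ (σ.states i)
  | .wunt φ φ', σ =>
      (∃ j, csatS R Lab φ' (σ.states j) ∧ ∀ i < j, csatS R Lab φ (σ.states i)) ∨
      (∀ i, csatS R Lab φ (σ.states i))
end

section ks2Construction

variable {S Act AP : Type} (Tr : S → Act → S → Prop) (Lab : S → Set AP)

/-- States of the Kripke structure `ks₂'(K)`: the states of `K` together with one fresh
state for each transition of `K`. -/
abbrev KState := S ⊕ {t : S × Act × S // Tr t.1 t.2.1 t.2.2}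

/-- The atomic propositions of `ks₂'(K)` are `AP ∪ Act ∪ {F}`, with `F` fresh. -/
abbrev AP2 (Act AP : Type) : Type := AP ⊕ Act ⊕ Unit

/-- The fresh atomic proposition `F`. -/
def Fprop (Act AP : Type) : AP2 Act AP := Sum.inr (Sum.inr ())

/-- Transitions of `ks₂'(K)`: for every transition `(s₀, α, s₁)` of `K`, the new state
`(s₀, α, s₁)` sits between `s₀` and `s₁`. -/
def KTrans : KState Tr → KState Tr → Prop
  | .inl s, .inr t => t.1.1 = s
  | .inr t, .inl s => t.1.2.2 = s
  | _, _ => False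

/-- Labelling of `ks₂'(K)`: an original state `s` is labelled `{F} ∪ 𝓛(s)`, the state
corresponding to a transition `(s₀, α, s₁)` is labelled `{α}`. -/
def KLab : KState Tr → Set (AP2 Act AP)
  | .inl s => insert (Fprop Act AP) (Sum.inl '' Lab s)
  | .inr t => {Sum.inr (Sum.inl t.1.2.1)}

/-- The path `ks₂'(σ)` in `ks₂'(K)` induced by a path `σ` in `K`: between consecutive
states of `σ` the corresponding transition-state is inserted. -/
def ks2Path (σ : LPath Tr) : KPath (KTrans Tr) where
  states n :=
    if n % 2 = 0 then Sum.inl (σ.states (n / 2))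
    else Sum.inr ⟨(σ.states (n / 2), σ.acts (n / 2), σ.states (n / 2 + 1)), σ.valid (n / 2)⟩
  valid n := by
    rcases Nat.even_or_odd n with ⟨k, hk⟩ | ⟨k, hk⟩
    · have h1 : n % 2 = 0 := by omega
      have h2 : ¬ (n + 1) % 2 = 0 := by omega
      have h3 : (n + 1) / 2 = n / 2 := by omega
      simp only [h1, h2, if_true, if_false, h3, KTrans]
    · have h1 : ¬ n % 2 = 0 := by omega
      have h2 : (n + 1) % 2 = 0 := by omega
      have h3 : (n + 1) / 2 = n / 2 + 1 := by omega
      simp only [h1, h2, if_true, if_false, h3, KTrans]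

end ks2Construction

/-- The atomic proposition `F`, as a CTL state formula. -/
def Fsf (Act AP : Type) : CSF (AP2 Act AP) := .atom (Fprop Act AP)

/-- Reinterpretation of an action formula `χ` as a CTL state formula over
`AP ∪ Act ∪ {F}` (actions are reused as atomic propositions). -/
def aform {Act AP : Type} : AForm Act → CSF (AP2 Act AP)
  | .tt => .tt
  | .atom a => .atom (Sum.inr (Sum.inl a))
  | .neg χ => .neg (aform χ)
  | .and χ χ' => .and (aform χ) (aform χ')

mutual
/-- The translation `ks₂'` from UCTL state formulas to CTL state formulas. -/
def ks2S {Act AP : Type} : USF Act AP → CSF (AP2 Act AP)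
  | .tt => .tt
  | .atom p => .atom (Sum.inl p)
  | .neg φ => .neg (ks2S φ)
  | .and φ ψ => .and (ks2S φ) (ks2S ψ)
  | .ex π => .ex (ks2P π)

/-- The translation `ks₂'` from UCTL path formulas to CTL path formulas:
`ks₂'(X_χ φ) = X(¬F ∧ χ ∧ ∃X(F ∧ ks₂'(φ)))`,
`ks₂'(φ _χU_χ' φ') = ((F ∧ ks₂'(φ)) ∨ (¬F ∧ χ)) U (¬F ∧ ∃((¬F ∧ χ') U (F ∧ ks₂'(φ'))))`,
and analogously with `W` for the weak until. -/
def ks2P {Act AP : Type} : UPF Act AP → CPF (AP2 Act AP)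
  | .anext χ φ =>
      .next (.and (.neg (Fsf Act AP))
        (.and (aform χ) (.ex (.next (.and (Fsf Act AP) (ks2S φ))))))
  | .unt φ χ χ' φ' =>
      .unt (CSF.or (.and (Fsf Act AP) (ks2S φ)) (.and (.neg (Fsf Act AP)) (aform χ)))
        (.and (.neg (Fsf Act AP))
          (.ex (.unt (.and (.neg (Fsf Act AP)) (aform χ'))
            (.and (Fsf Act AP) (ks2S φ')))))
  | .wunt φ χ χ' φ' =>
      .wunt (CSF.or (.and (Fsf Act AP) (ks2S φ)) (.and (.neg (Fsf Act AP)) (aform χ)))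
        (.and (.neg (Fsf Act AP))
          (.ex (.unt (.and (.neg (Fsf Act AP)) (aform χ'))
            (.and (Fsf Act AP) (ks2S φ')))))
end

section Proof

variable {S Act AP : Type} {Tr : S → Act → S → Prop} {Lab : S → Set AP}

theorem KPath.ext' {S : Type} {R : S → S → Prop} {τ₁ τ₂ : KPath R}
    (h : τ₁.states = τ₂.states) : τ₁ = τ₂ := by
  cases τ₁; cases τ₂; simpa using h

/-- Shift of a path in a Kripke structure. -/
def KPath.shift {S : Type} {R : S → S → Prop} (τ : KPath R) (k : ℕ) : KPath R where
  states n := τ.states (n + k)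
  valid n := by have := τ.valid (n + k); rwa [show n + k + 1 = n + 1 + k by omega] at this

theorem ks2_even (σ : LPath Tr) (k : ℕ) :
    (ks2Path Tr σ).states (2 * k) = Sum.inl (σ.states k) := by
  have h1 : 2 * k % 2 = 0 := by omega
  have h2 : 2 * k / 2 = k := by omega
  simp [ks2Path, h1, h2]

theorem ks2_odd (σ : LPath Tr) (k : ℕ) :
    (ks2Path Tr σ).states (2 * k + 1) =
      Sum.inr ⟨(σ.states k, σ.acts k, σ.states (k + 1)), σ.valid k⟩ := by
  have h1 : ¬ (2 * k + 1) % 2 = 0 := by omega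
  have h2 : (2 * k + 1) / 2 = k := by omega
  simp [ks2Path, h1, h2]

theorem F_mem_inl (s : S) : Fprop Act AP ∈ KLab Tr Lab (Sum.inl s) := by
  simp [KLab]

theorem F_not_mem_inr (t : {t : S × Act × S // Tr t.1 t.2.1 t.2.2}) :
    Fprop Act AP ∉ KLab Tr Lab (Sum.inr t) := by
  simp [KLab, Fprop]

theorem atomL (p : AP) (s : S) :
    (Sum.inl p : AP2 Act AP) ∈ KLab Tr Lab (Sum.inl s) ↔ p ∈ Lab s := by
  simp [KLab, Fprop]

theorem aform_sat (χ : AForm Act) (t : {t : S × Act × S // Tr t.1 t.2.1 t.2.2}) :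
    csatS (KTrans Tr) (KLab Tr Lab) (aform χ) (Sum.inr t) ↔ asatA χ t.1.2.1 := by
  induction χ with
  | tt => simp [aform, csatS, asatA]
  | atom a => simp [aform, csatS, asatA, KLab]; exact eq_comm
  | neg χ ih => simp [aform, csatS, asatA, ih]
  | and χ χ' ih ih' => simp [aform, csatS, asatA, ih, ih']

theorem step_from_inr (τ : KPath (KTrans Tr)) (n : ℕ)
    (t : {t : S × Act × S // Tr t.1 t.2.1 t.2.2}) (h : τ.states n = Sum.inr t) :
    τ.states (n + 1) = Sum.inl t.1.2.2 := by
  have hv := τ.valid n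
  rw [h] at hv
  cases h' : τ.states (n + 1) with
  | inl x => rw [h'] at hv; simp [KTrans] at hv; rw [hv]
  | inr t' => rw [h'] at hv; simp [KTrans] at hv

theorem step_from_inl (τ : KPath (KTrans Tr)) (n : ℕ) (s : S)
    (h : τ.states n = Sum.inl s) :
    ∃ t, τ.states (n + 1) = Sum.inr t ∧ t.1.1 = s := by
  have hv := τ.valid n
  rw [h] at hv
  cases h' : τ.states (n + 1) with
  | inl x => rw [h'] at hv; simp [KTrans] at hv
  | inr t' => rw [h'] at hv; simp [KTrans] at hv; exact ⟨t', rfl, hv⟩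

theorem exists_lpath (τ : KPath (KTrans Tr)) (s : S) (h0 : τ.states 0 = Sum.inl s) :
    ∃ σ : LPath Tr, σ.states 0 = s ∧ ks2Path Tr σ = τ := by
  have hx : ∀ n, ∃ x, τ.states (2 * n) = Sum.inl x := by
    intro n
    induction n with
    | zero => exact ⟨s, h0⟩
    | succ m ih =>
        obtain ⟨x, hxm⟩ := ih
        obtain ⟨t, ht, -⟩ := step_from_inl τ (2 * m) x hxm
        have := step_from_inr τ (2 * m + 1) t ht
        exact ⟨t.1.2.2, by rw [show 2 * (m + 1) = 2 * m + 1 + 1 by omega]; exact this⟩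
  choose x hxx using hx
  have ht : ∀ n, ∃ t, τ.states (2 * n + 1) = Sum.inr t ∧ t.1.1 = x n :=
    fun n => step_from_inl τ (2 * n) (x n) (hxx n)
  choose t htt ht1 using ht
  have ht2 : ∀ n, (t n).1.2.2 = x (n + 1) := by
    intro n
    have := step_from_inr τ (2 * n + 1) (t n) (htt n)
    rw [show 2 * n + 1 + 1 = 2 * (n + 1) by omega, hxx (n + 1)] at this
    exact (Sum.inl.inj this).symm
  have hx0 : x 0 = s := by
    have := hxx 0; rw [h0] at this; exact (Sum.inl.inj this).symm
  refine ⟨⟨x, fun n => (t n).1.2.1, ?_⟩, hx0, ?_⟩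
  · intro n
    have h := (t n).2
    rwa [ht1 n, ht2 n] at h
  · apply KPath.ext'
    funext n
    rcases Nat.even_or_odd n with ⟨k, hk⟩ | ⟨k, hk⟩
    · rw [show n = 2 * k by omega]
      rw [ks2_even, hxx k]
    · rw [show n = 2 * k + 1 by omega]
      rw [ks2_odd, htt k]
      congr 1
      apply Subtype.ext
      exact Prod.ext (ht1 k).symm (Prod.ext rfl (ht2 k).symm)

end Proof

section Proof2

variable {S Act AP : Type} {Tr : S → Act → S → Prop} {Lab : S → Set AP}

/-- The left-hand body of the translated until formula. -/
def Af (χ : AForm Act) (φ : USF Act AP) : CSF (AP2 Act AP) :=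
  CSF.or (.and (Fsf Act AP) (ks2S φ)) (.and (.neg (Fsf Act AP)) (aform χ))

/-- The right-hand body of the translated until formula. -/
def Bf (χ' : AForm Act) (φ' : USF Act AP) : CSF (AP2 Act AP) :=
  .and (.neg (Fsf Act AP)) (.ex (.unt (.and (.neg (Fsf Act AP)) (aform χ'))
      (.and (Fsf Act AP) (ks2S φ'))))

theorem Asat_inl {χ : AForm Act} {φ : USF Act AP}
    (ih : ∀ s, usatS Tr Lab φ s ↔ csatS (KTrans Tr) (KLab Tr Lab) (ks2S φ) (Sum.inl s))
    (s : S) :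
    csatS (KTrans Tr) (KLab Tr Lab) (Af χ φ) (Sum.inl s) ↔ usatS Tr Lab φ s := by
  have hF := F_mem_inl (Tr := Tr) (Lab := Lab) s
  simp [Af, CSF.or, csatS, Fsf, hF, ih s]

theorem Asat_inr {χ : AForm Act} {φ : USF Act AP}
    (t : {t : S × Act × S // Tr t.1 t.2.1 t.2.2}) :
    csatS (KTrans Tr) (KLab Tr Lab) (Af χ φ) (Sum.inr t) ↔ asatA χ t.1.2.1 := by
  have hF := F_not_mem_inr (Tr := Tr) (Lab := Lab) t
  simp [Af, CSF.or, csatS, Fsf, hF, aform_sat]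

theorem Bsat {χ' : AForm Act} {φ' : USF Act AP}
    (ih : ∀ s, usatS Tr Lab φ' s ↔ csatS (KTrans Tr) (KLab Tr Lab) (ks2S φ') (Sum.inl s))
    (σ : LPath Tr) (j : ℕ) :
    csatS (KTrans Tr) (KLab Tr Lab) (Bf χ' φ') ((ks2Path Tr σ).states (2 * j + 1)) ↔
      asatA χ' (σ.acts j) ∧ usatS Tr Lab φ' (σ.states (j + 1)) := by
  rw [ks2_odd]
  set t : {t : S × Act × S // Tr t.1 t.2.1 t.2.2} :=
    ⟨(σ.states j, σ.acts j, σ.states (j + 1)), σ.valid j⟩ with htdef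
  simp only [Bf, csatS, csatP, Fsf]
  constructor
  · rintro ⟨-, τ, h0, k, ⟨hFk, hφk⟩, hlt⟩
    match k with
    | 0 =>
        rw [h0] at hFk
        exact absurd hFk (F_not_mem_inr t)
    | 1 =>
        have h1 : τ.states 1 = Sum.inl (σ.states (j + 1)) := step_from_inr τ 0 t h0
        rw [h1] at hφk
        have hχ := hlt 0 (by omega)
        rw [h0] at hχ
        exact ⟨(aform_sat χ' t).mp hχ.2, (ih _).mpr hφk⟩
    | (k + 2) =>
        have h1 : τ.states 1 = Sum.inl (σ.states (j + 1)) := step_from_inr τ 0 t h0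
        have hχ := hlt 1 (by omega)
        rw [h1] at hχ
        exact absurd (F_mem_inl _) hχ.1
  · rintro ⟨hχ', hφ'⟩
    refine ⟨F_not_mem_inr t, (ks2Path Tr σ).shift (2 * j + 1), ?_, 1, ?_, ?_⟩
    · show (ks2Path Tr σ).states (0 + (2 * j + 1)) = Sum.inr t
      rw [show 0 + (2 * j + 1) = 2 * j + 1 by omega, ks2_odd]
    · have hs : ((ks2Path Tr σ).shift (2 * j + 1)).states 1 = Sum.inl (σ.states (j + 1)) := by
        show (ks2Path Tr σ).states (1 + (2 * j + 1)) = _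
        rw [show 1 + (2 * j + 1) = 2 * (j + 1) by omega, ks2_even]
      rw [hs]
      exact ⟨F_mem_inl _, (ih _).mp hφ'⟩
    · intro i hi
      interval_cases i
      have hs : ((ks2Path Tr σ).shift (2 * j + 1)).states 0 = Sum.inr t := by
        show (ks2Path Tr σ).states (0 + (2 * j + 1)) = _
        rw [show 0 + (2 * j + 1) = 2 * j + 1 by omega, ks2_odd]
      rw [hs]
      exact ⟨F_not_mem_inr t, (aform_sat χ' t).mpr hχ'⟩

theorem unt_core {χ χ' : AForm Act} {φ φ' : USF Act AP}
    (ihφ : ∀ s, usatS Tr Lab φ s ↔ csatS (KTrans Tr) (KLab Tr Lab) (ks2S φ) (Sum.inl s))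
    (ihφ' : ∀ s, usatS Tr Lab φ' s ↔ csatS (KTrans Tr) (KLab Tr Lab) (ks2S φ') (Sum.inl s))
    (σ : LPath Tr) :
    (∃ j, asatA χ' (σ.acts j) ∧ usatS Tr Lab φ' (σ.states (j + 1)) ∧
        (∀ i ≤ j, usatS Tr Lab φ (σ.states i)) ∧ (∀ i < j, asatA χ (σ.acts i))) ↔
      (∃ J, csatS (KTrans Tr) (KLab Tr Lab) (Bf χ' φ') ((ks2Path Tr σ).states J) ∧
        ∀ I < J, csatS (KTrans Tr) (KLab Tr Lab) (Af χ φ) ((ks2Path Tr σ).states I)) := by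
  constructor
  · rintro ⟨j, h1, h2, h3, h4⟩
    refine ⟨2 * j + 1, (Bsat ihφ' σ j).mpr ⟨h1, h2⟩, ?_⟩
    intro I hI
    rcases Nat.even_or_odd I with ⟨i, hi⟩ | ⟨i, hi⟩
    · rw [show I = 2 * i by omega, ks2_even]
      exact (Asat_inl ihφ _).mpr (h3 i (by omega))
    · rw [show I = 2 * i + 1 by omega, ks2_odd]
      exact (Asat_inr _).mpr (h4 i (by omega))
  · rintro ⟨J, hB, hA⟩
    rcases Nat.even_or_odd J with ⟨j, hj⟩ | ⟨j, hj⟩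
    · exfalso
      rw [show J = 2 * j by omega, ks2_even] at hB
      simp only [Bf, csatS, Fsf] at hB
      exact hB.1 (F_mem_inl _)
    · rw [show J = 2 * j + 1 by omega] at hB hA
      obtain ⟨h1, h2⟩ := (Bsat ihφ' σ j).mp hB
      refine ⟨j, h1, h2, ?_, ?_⟩
      · intro i hij
        have := hA (2 * i) (by omega)
        rw [ks2_even] at this
        exact (Asat_inl ihφ _).mp this
      · intro i hij
        have := hA (2 * i + 1) (by omega)
        rw [ks2_odd] at this
        exact (Asat_inr _).mp this

theorem all_core {χ : AForm Act} {φ : USF Act AP}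
    (ihφ : ∀ s, usatS Tr Lab φ s ↔ csatS (KTrans Tr) (KLab Tr Lab) (ks2S φ) (Sum.inl s))
    (σ : LPath Tr) :
    (∀ i, usatS Tr Lab φ (σ.states i) ∧ asatA χ (σ.acts i)) ↔
      (∀ I, csatS (KTrans Tr) (KLab Tr Lab) (Af χ φ) ((ks2Path Tr σ).states I)) := by
  constructor
  · intro h I
    rcases Nat.even_or_odd I with ⟨i, hi⟩ | ⟨i, hi⟩
    · rw [show I = 2 * i by omega, ks2_even]
      exact (Asat_inl ihφ _).mpr (h i).1
    · rw [show I = 2 * i + 1 by omega, ks2_odd]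
      exact (Asat_inr _).mpr (h i).2
  · intro h i
    constructor
    · have := h (2 * i)
      rw [ks2_even] at this
      exact (Asat_inl ihφ _).mp this
    · have := h (2 * i + 1)
      rw [ks2_odd] at this
      exact (Asat_inr _).mp this

end Proof2

mutual
theorem stateS {S Act AP : Type} (Tr : S → Act → S → Prop) (Lab : S → Set AP) :
    ∀ (φ : USF Act AP) (s : S),
      usatS Tr Lab φ s ↔ csatS (KTrans Tr) (KLab Tr Lab) (ks2S φ) (Sum.inl s)
  | .tt, s => by simp [usatS, ks2S, csatS]
  | .atom p, s => by
      simp only [usatS, ks2S, csatS]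
      exact (atomL p s).symm
  | .neg φ, s => by
      simp only [usatS, ks2S, csatS]
      exact not_congr (stateS Tr Lab φ s)
  | .and φ ψ, s => by
      simp only [usatS, ks2S, csatS]
      exact and_congr (stateS Tr Lab φ s) (stateS Tr Lab ψ s)
  | .ex π, s => by
      simp only [usatS, ks2S, csatS]
      constructor
      · rintro ⟨σ, h0, hπ⟩
        refine ⟨ks2Path Tr σ, ?_, (pathP Tr Lab π σ).mp hπ⟩
        rw [show (0 : ℕ) = 2 * 0 by omega, ks2_even, h0]
      · rintro ⟨τ, h0, hπ⟩
        obtain ⟨σ, hs, heq⟩ := exists_lpath τ s h0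
        refine ⟨σ, hs, (pathP Tr Lab π σ).mpr ?_⟩
        rw [heq]; exact hπ

theorem pathP {S Act AP : Type} (Tr : S → Act → S → Prop) (Lab : S → Set AP) :
    ∀ (π : UPF Act AP) (σ : LPath Tr),
      usatP Tr Lab π σ ↔ csatP (KTrans Tr) (KLab Tr Lab) (ks2P π) (ks2Path Tr σ)
  | .anext χ φ, σ => by
      simp only [usatP, ks2P, csatP]
      rw [show (1 : ℕ) = 2 * 0 + 1 by omega, ks2_odd]
      set t : {t : S × Act × S // Tr t.1 t.2.1 t.2.2} :=
        ⟨(σ.states 0, σ.acts 0, σ.states (0 + 1)), σ.valid 0⟩ with htdef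
      simp only [csatS, csatP, Fsf]
      constructor
      · rintro ⟨hχ, hφ⟩
        refine ⟨F_not_mem_inr t, (aform_sat χ t).mpr hχ, (ks2Path Tr σ).shift 1, rfl, ?_⟩
        have hs : ((ks2Path Tr σ).shift 1).states 1 = Sum.inl (σ.states 1) := by
          show (ks2Path Tr σ).states (1 + 1) = _
          rw [show 1 + 1 = 2 * 1 by omega, ks2_even]
        rw [hs]
        exact ⟨F_mem_inl _, (stateS Tr Lab φ _).mp hφ⟩
      · rintro ⟨-, hχ, τ, h0, hnx⟩
        have h1 : τ.states 1 = Sum.inl (σ.states 1) := by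
          simpa using step_from_inr τ 0 t h0
        rw [h1] at hnx
        exact ⟨(aform_sat χ t).mp hχ, (stateS Tr Lab φ _).mpr hnx.2⟩
  | .unt φ χ χ' φ', σ => by
      simp only [usatP, ks2P, csatP]
      exact unt_core (stateS Tr Lab φ) (stateS Tr Lab φ') σ
  | .wunt φ χ χ' φ', σ => by
      simp only [usatP, ks2P, csatP]
      exact or_congr (unt_core (stateS Tr Lab φ) (stateS Tr Lab φ') σ)
        (all_core (stateS Tr Lab φ) σ)
end

/-- Let `K` be a Kripke transition system, `σ` a path in `K`, and `φ` a
UCTL formula (state formula or path formula). Then the mapping `ks₂'` preserves truth: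
`K,σ ⊨ φ` iff `ks₂'(K), ks₂'(σ) ⊨ ks₂'(φ)`. -/
theorem ks2'_preserves_truth {S Act AP : Type} (Tr : S → Act → S → Prop)
    (Lab : S → Set AP) (σ : LPath Tr) :
    (∀ φ : USF Act AP,
      usatS Tr Lab φ (σ.states 0) ↔
        csatS (KTrans Tr) (KLab Tr Lab) (ks2S φ) (Sum.inl (σ.states 0))) ∧
    (∀ π : UPF Act AP,
      usatP Tr Lab π σ ↔
        csatP (KTrans Tr) (KLab Tr Lab) (ks2P π) (ks2Path Tr σ)) :=
  ⟨fun φ => stateS Tr Lab φ (σ.states 0), fun π => pathP Tr Lab π σ⟩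

end Stmt9
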